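/- arXiv:2206.12989 — 2 statements merged into one kernel-verified Lean document; each statement's English description precedes it below -/
import Mathlib

section
/- One-dimensional unfolding lemma: let P = [0, L] be a segment and f : P → ℝ a piecewise isometry (|f'| = 1 off a finite set of fold points) with finitely many fold points. Let p ∈ P be a point that is not a fold point, and for i ∈ (0,1] define f_i(x) = f(p + i(x − p))/i − f(p)/i + f(p). Then each f_i is a piecewise isometry of P with fold points only at p + (F − p)/i ∩ P (F the fold set of f), the map i ↦ f_i is continuous in the sup norm on the domain where defined, f_1 = f, and for all i smaller than the distance from p to the nearest fold point divided by max(p, L−p), f_i is an isometry of P onto a segment (an unfolded state). -/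
/-- One-dimensional unfolding lemma. `f : [0,L] → ℝ` is a piecewise isometry (slope `±1`
off the finite fold set `F`), `p ∈ [0,L]` is not a fold point, and for `i ∈ (0,1]` we set
`f_i(x) = (f(p + i(x-p)) - f(p))/i + f(p)`. Then: `f_1 = f` on `[0,L]`; each `f_i` is a
piecewise isometry whose fold points are among `{p + (y-p)/i : y ∈ F}`; the family is
continuous in the sup norm on `(0,1]`; and once `i·max(p, L-p)` is smaller than the
distance from `p` to every fold point, `f_i` is a global isometry of `[0,L]` onto a
segment. -/
theorem one_dim_unfolding (L : ℝ) (hL : 0 < L) (f : ℝ → ℝ) (F : Finset ℝ)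
    (hFsub : (F : Set ℝ) ⊆ Set.Icc 0 L)
    (hcont : ContinuousOn f (Set.Icc 0 L))
    (hiso : ∀ x ∈ Set.Icc 0 L, x ∉ F →
      ∃ s : ℝ, |s| = 1 ∧ HasDerivWithinAt f s (Set.Icc 0 L) x)
    (p : ℝ) (hp : p ∈ Set.Icc 0 L) (hpF : p ∉ F)
    (fi : ℝ → ℝ → ℝ)
    (hfi : fi = fun i x => (f (p + i * (x - p)) - f p) / i + f p) :
    (∀ x ∈ Set.Icc 0 L, fi 1 x = f x) ∧
    (∀ i ∈ Set.Ioc (0:ℝ) 1, ∀ x ∈ Set.Icc 0 L, p + i * (x - p) ∉ F →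
      ∃ s : ℝ, |s| = 1 ∧ HasDerivWithinAt (fi i) s (Set.Icc 0 L) x) ∧
    (∀ i ∈ Set.Ioc (0:ℝ) 1, ∀ ε > (0:ℝ), ∃ δ > (0:ℝ), ∀ j ∈ Set.Ioc (0:ℝ) 1,
      |i - j| < δ → ∀ x ∈ Set.Icc 0 L, |fi i x - fi j x| < ε) ∧
    (∀ i ∈ Set.Ioc (0:ℝ) 1, (∀ y ∈ F, i * max p (L - p) < |p - y|) →
      ∀ x ∈ Set.Icc 0 L, ∀ x' ∈ Set.Icc 0 L, |fi i x - fi i x'| = |x - x'|) := by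
  classical
  obtain ⟨hp0, hpL⟩ := hp
  -- a global choice of slopes
  set g : ℝ → ℝ := fun t =>
    if h : t ∈ Set.Icc 0 L ∧ t ∉ F then (hiso t h.1 h.2).choose else 0 with hg_def
  have hg : ∀ t, t ∈ Set.Icc 0 L → t ∉ F →
      |g t| = 1 ∧ HasDerivWithinAt f (g t) (Set.Icc 0 L) t := by
    intro t ht htF
    have h : t ∈ Set.Icc 0 L ∧ t ∉ F := ⟨ht, htF⟩
    simp only [hg_def, dif_pos h]
    exact (hiso t h.1 h.2).choose_spec
  -- Mean value: on a fold-free open interval, `f` preserves lengths exactly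
  have mvt : ∀ a b : ℝ, 0 ≤ a → b ≤ L → a < b → (∀ t ∈ Set.Ioo a b, t ∉ F) →
      |f b - f a| = b - a := by
    intro a b ha hbL hab hFree
    have hsub : Set.Icc a b ⊆ Set.Icc 0 L := Set.Icc_subset_Icc ha hbL
    have hder : ∀ t ∈ Set.Ioo a b, HasDerivAt f (g t) t := by
      intro t ht
      have htF : t ∉ F := hFree t ht
      have htmem : t ∈ Set.Icc 0 L := hsub (Set.Ioo_subset_Icc_self ht)
      have ht0 : 0 < t := lt_of_le_of_lt ha ht.1
      have htL : t < L := lt_of_lt_of_le ht.2 hbL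
      exact ((hg t htmem htF).2).hasDerivAt (Icc_mem_nhds ht0 htL)
    obtain ⟨c, hc, hcs⟩ := exists_hasDerivAt_eq_slope f g hab (hcont.mono hsub) hder
    have hcF : c ∉ F := hFree c hc
    have hcmem : c ∈ Set.Icc 0 L := hsub (Set.Ioo_subset_Icc_self hc)
    have h1 := (hg c hcmem hcF).1
    rw [hcs, abs_div, abs_of_pos (by linarith : (0:ℝ) < b - a)] at h1
    have hba : b - a ≠ 0 := by linarith
    exact (div_eq_one_iff_eq hba).mp h1
  -- base case: no interior fold points
  have base : ∀ a b : ℝ, a ∈ Set.Icc 0 L → b ∈ Set.Icc 0 L → a ≤ b →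
      (F.filter (fun z => a < z ∧ z < b)).card = 0 → |f b - f a| ≤ b - a := by
    intro a b ha hb hab hcard
    rcases eq_or_lt_of_le hab with rfl | hab'
    · simp
    · have hempty : ∀ t ∈ Set.Ioo a b, t ∉ F := by
        intro t ht htF
        have hmem : t ∈ F.filter (fun z => a < z ∧ z < b) := by
          simp [Finset.mem_filter, htF, ht.1, ht.2]
        have := Finset.card_pos.mpr ⟨t, hmem⟩
        omega
      exact (mvt a b ha.1 hb.2 hab' hempty).le
  -- `f` is 1-Lipschitz on `[0,L]`
  have key : ∀ n : ℕ, ∀ a b : ℝ, a ∈ Set.Icc 0 L → b ∈ Set.Icc 0 L → a ≤ b →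
      (F.filter (fun z => a < z ∧ z < b)).card ≤ n → |f b - f a| ≤ b - a := by
    intro n
    induction n with
    | zero =>
      intro a b ha hb hab hcard
      exact base a b ha hb hab (Nat.le_zero.mp hcard)
    | succ n ih =>
      intro a b ha hb hab hcard
      by_cases hzero : (F.filter (fun z => a < z ∧ z < b)).card = 0
      · exact base a b ha hb hab hzero
      · obtain ⟨z, hz⟩ := Finset.card_pos.mp (Nat.pos_of_ne_zero hzero)
        rw [Finset.mem_filter] at hz
        obtain ⟨hzF, hza, hzb⟩ := hz
        have hzmem : z ∈ Set.Icc 0 L := hFsub hzF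
        have h1 : (F.filter (fun w => a < w ∧ w < z)).card ≤ n := by
          have hsub : F.filter (fun w => a < w ∧ w < z) ⊆
              (F.filter (fun z => a < z ∧ z < b)).erase z := by
            intro w hw
            rw [Finset.mem_filter] at hw
            refine Finset.mem_erase.mpr ⟨by linarith [hw.2.2], ?_⟩
            exact Finset.mem_filter.mpr ⟨hw.1, hw.2.1, by linarith [hw.2.2]⟩
          calc _ ≤ _ := Finset.card_le_card hsub
            _ = (F.filter (fun z => a < z ∧ z < b)).card - 1 :=
              Finset.card_erase_of_mem (Finset.mem_filter.mpr ⟨hzF, hza, hzb⟩)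
            _ ≤ n := by omega
        have h2 : (F.filter (fun w => z < w ∧ w < b)).card ≤ n := by
          have hsub : F.filter (fun w => z < w ∧ w < b) ⊆
              (F.filter (fun z => a < z ∧ z < b)).erase z := by
            intro w hw
            rw [Finset.mem_filter] at hw
            refine Finset.mem_erase.mpr ⟨by linarith [hw.2.1], ?_⟩
            exact Finset.mem_filter.mpr ⟨hw.1, by linarith [hw.2.1], hw.2.2⟩
          calc _ ≤ _ := Finset.card_le_card hsub
            _ = (F.filter (fun z => a < z ∧ z < b)).card - 1 :=
              Finset.card_erase_of_mem (Finset.mem_filter.mpr ⟨hzF, hza, hzb⟩)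
            _ ≤ n := by omega
        have i1 := ih a z ha hzmem hza.le h1
        have i2 := ih z b hzmem hb hzb.le h2
        calc |f b - f a| ≤ |f b - f z| + |f z - f a| := abs_sub_le _ _ _
          _ ≤ (b - z) + (z - a) := add_le_add i2 i1
          _ = b - a := by ring
  have lip : ∀ a ∈ Set.Icc 0 L, ∀ b ∈ Set.Icc 0 L, |f b - f a| ≤ |b - a| := by
    intro a ha b hb
    rcases le_total a b with h | h
    · rw [abs_of_nonneg (by linarith : (0:ℝ) ≤ b - a)]
      exact key _ a b ha hb h le_rfl
    · rw [abs_of_nonpos (by linarith : b - a ≤ 0), abs_sub_comm]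
      have := key _ b a hb ha h le_rfl
      linarith
  -- rescaled points stay in the segment
  have hq : ∀ i, 0 < i → i ≤ 1 → ∀ x ∈ Set.Icc 0 L, p + i * (x - p) ∈ Set.Icc 0 L := by
    intro i hi0 hi1 x hx
    obtain ⟨hx0, hxL⟩ := hx
    constructor <;> nlinarith
  refine ⟨?_, ?_, ?_, ?_⟩
  · -- f_1 = f
    intro x hx
    simp [hfi]
  · -- piecewise isometry
    intro i hi x hx hnF
    obtain ⟨hi0, hi1⟩ := hi
    have hqx := hq i hi0 hi1 x hx
    obtain ⟨s, hs1, hsd⟩ := hiso _ hqx hnF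
    refine ⟨s, hs1, ?_⟩
    have hgd : HasDerivWithinAt (fun x => p + i * (x - p)) i (Set.Icc 0 L) x := by
      simpa using (((hasDerivWithinAt_id x (Set.Icc 0 L)).sub_const p).const_mul i).const_add p
    have hmaps : Set.MapsTo (fun x => p + i * (x - p)) (Set.Icc 0 L) (Set.Icc 0 L) :=
      fun y hy => hq i hi0 hi1 y hy
    have hcomp := HasDerivWithinAt.comp x hsd hgd hmaps
    have h2 : s * i / i = s := mul_div_cancel_right₀ s (ne_of_gt hi0)
    have h3 : HasDerivWithinAt
        (fun x => (f (p + i * (x - p)) - f p) / i + f p) (s * i / i) (Set.Icc 0 L) x := by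
      exact ((hcomp.sub_const (f p)).div_const i).add_const (f p)
    rw [hfi]
    simpa [h2] using h3
  · -- continuity in sup norm
    intro i hi ε hε
    obtain ⟨hi0, hi1⟩ := hi
    refine ⟨ε * i / (4 * L + 1), by positivity, ?_⟩
    intro j hj hij x hx
    obtain ⟨hj0, hj1⟩ := hj
    obtain ⟨hx0, hxL⟩ := hx
    have hxp : |x - p| ≤ L := by
      rw [abs_le]; constructor <;> linarith
    set A := f (p + i * (x - p)) - f p with hA
    set B := f (p + j * (x - p)) - f p with hB
    have hqi := hq i hi0 hi1 x ⟨hx0, hxL⟩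
    have hqj := hq j hj0 hj1 x ⟨hx0, hxL⟩
    have hAB : |A - B| ≤ |i - j| * L := by
      have := lip _ hqj _ hqi
      have heq : p + i * (x - p) - (p + j * (x - p)) = (i - j) * (x - p) := by ring
      rw [heq, abs_mul] at this
      calc |A - B| = |f (p + i * (x - p)) - f (p + j * (x - p))| := by rw [hA, hB]; ring_nf
        _ ≤ |i - j| * |x - p| := this
        _ ≤ |i - j| * L := by
          have : (0:ℝ) ≤ |i - j| := abs_nonneg _
          nlinarith
    have hBb : |B| ≤ j * L := by
      have := lip p ⟨hp0, hpL⟩ _ hqj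
      have heq : p + j * (x - p) - p = j * (x - p) := by ring
      rw [heq, abs_mul, abs_of_pos hj0] at this
      calc |B| ≤ j * |x - p| := this
        _ ≤ j * L := by nlinarith
    have hval : fi i x - fi j x = (A - B) / i + B * (j - i) / (i * j) := by
      rw [hfi, hA, hB]
      field_simp
      ring
    have hbound : |fi i x - fi j x| ≤ 2 * L * |i - j| / i := by
      rw [hval]
      calc |(A - B) / i + B * (j - i) / (i * j)|
          ≤ |(A - B) / i| + |B * (j - i) / (i * j)| := abs_add_le _ _
        _ = |A - B| / i + |B| * |i - j| / (i * j) := by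
            rw [abs_div, abs_div, abs_mul, abs_mul, abs_of_pos hi0, abs_of_pos hj0,
              abs_sub_comm j i]
        _ ≤ (|i - j| * L) / i + (j * L) * |i - j| / (i * j) := by
            gcongr
        _ = 2 * L * |i - j| / i := by
            field_simp
            ring
    have hfin : 2 * L * |i - j| / i < ε := by
      rw [div_lt_iff₀ hi0]
      have hD0 : 0 < ε * i / (4 * L + 1) := by positivity
      have e1 : 2 * L * |i - j| < 2 * L * (ε * i / (4 * L + 1)) :=
        mul_lt_mul_of_pos_left hij (by linarith)
      have e2 : 2 * L * (ε * i / (4 * L + 1)) < (4 * L + 1) * (ε * i / (4 * L + 1)) :=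
        mul_lt_mul_of_pos_right (by linarith) hD0
      have e3 : (4 * L + 1) * (ε * i / (4 * L + 1)) = ε * i := by field_simp
      linarith
    linarith [hbound, hfin]
  · -- global isometry once folds are far
    intro i hi hsep x hx x' hx'
    obtain ⟨hi0, hi1⟩ := hi
    -- any point within i * max p (L-p) of p is not a fold point
    have hC : ∀ t : ℝ, |t - p| ≤ i * max p (L - p) → t ∉ F := by
      intro t ht htF
      have := hsep t htF
      rw [abs_sub_comm] at ht
      linarith
    have hM : ∀ w ∈ Set.Icc 0 L, |w - p| ≤ max p (L - p) := by
      intro w hw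
      rw [abs_le]
      constructor
      · have := le_max_left p (L - p)
        linarith [hw.1]
      · have := le_max_right p (L - p)
        linarith [hw.2]
    -- exact isometry on the rescaled segment
    have main : ∀ u ∈ Set.Icc 0 L, ∀ v ∈ Set.Icc 0 L, u ≤ v →
        |f (p + i * (v - p)) - f (p + i * (u - p))| = i * (v - u) := by
      intro u hu v hv huv
      rcases eq_or_lt_of_le huv with rfl | huv'
      · simp
      · have hqu := hq i hi0 hi1 u hu
        have hqv := hq i hi0 hi1 v hv
        have hlt : p + i * (u - p) < p + i * (v - p) := by nlinarith
        have hfree : ∀ t ∈ Set.Ioo (p + i * (u - p)) (p + i * (v - p)), t ∉ F := by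
          intro t ht
          apply hC
          have h1 := hM u hu
          have h2 := hM v hv
          rw [abs_le] at h1 h2 ⊢
          constructor
          · nlinarith [ht.1]
          · nlinarith [ht.2]
        have := mvt _ _ hqu.1 hqv.2 hlt hfree
        rw [this]
        ring
    have hmain' : |f (p + i * (x - p)) - f (p + i * (x' - p))| = i * |x - x'| := by
      rcases le_total x' x with h | h
      · rw [main x' hx' x hx h, abs_of_nonneg (by linarith : (0:ℝ) ≤ x - x')]
      · rw [abs_sub_comm, main x hx x' hx' h, abs_sub_comm x x',
          abs_of_nonneg (by linarith : (0:ℝ) ≤ x' - x)]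
    rw [hfi]
    simp only
    have : (f (p + i * (x - p)) - f p) / i + f p - ((f (p + i * (x' - p)) - f p) / i + f p)
        = (f (p + i * (x - p)) - f (p + i * (x' - p))) / i := by
      field_simp
      ring
    rw [this, abs_div, abs_of_pos hi0, hmain']
    field_simp
end

section
/- If a segment in ℝ³ from a to b has |a − b| = r₁ + r₂ with r₁, r₂ > 0, then the intersection of the closed ball B(a, r₁) and the closed ball B(b, r₂) consists of exactly one point, namely the point on segment [a,b] at distance r₁ from a. More generally, if |a − b| ≥ r₁ + r₂ − ε, every point of B(a, r₁) ∩ B(b, r₂) is within distance √(2ε·max(r₁,r₂)) + ε of the segment [a,b]. -/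
open scoped RealInnerProductSpace

/-- Touching balls meet in one point, with a quantitative version. If
`|a - b| = r₁ + r₂` with `r₁, r₂ > 0`, then `B(a,r₁) ∩ B(b,r₂)` is exactly the single
point of segment `[a,b]` at distance `r₁` from `a`. More generally, if
`|a - b| ≥ r₁ + r₂ - ε` then every point of the intersection is within distance
`√(2 ε max(r₁,r₂)) + ε` of the segment `[a,b]`. -/
theorem ball_intersection_near_segment
    (a b : EuclideanSpace ℝ (Fin 3)) (r₁ r₂ : ℝ) (hr₁ : 0 < r₁) (hr₂ : 0 < r₂) :
    (dist a b = r₁ + r₂ →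
      Metric.closedBall a r₁ ∩ Metric.closedBall b r₂ =
        {a + (r₁ / (r₁ + r₂)) • (b - a)}) ∧
    (∀ ε : ℝ, 0 ≤ ε → dist a b ≥ r₁ + r₂ - ε →
      ∀ x ∈ Metric.closedBall a r₁ ∩ Metric.closedBall b r₂,
        Metric.infDist x (segment ℝ a b) ≤ Real.sqrt (2 * ε * max r₁ r₂) + ε) := by
  have hsum : 0 < r₁ + r₂ := by linarith
  constructor
  · -- exact case
    intro hd
    have hba : ‖b - a‖ = r₁ + r₂ := by
      rw [← dist_eq_norm, dist_comm, hd]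
    ext x
    simp only [Set.mem_inter_iff, Metric.mem_closedBall, Set.mem_singleton_iff]
    constructor
    · rintro ⟨h1, h2⟩
      have htr := dist_triangle a x b
      rw [dist_comm a x] at htr
      have e1 : dist x a = r₁ := by linarith
      have e2 : dist x b = r₂ := by linarith
      have hw : Wbtw ℝ a x b := by
        refine dist_add_dist_eq_iff.mp ?_
        rw [dist_comm a x, e1, e2, hd]
      have hx : x ∈ segment ℝ a b := mem_segment_iff_wbtw.mpr hw
      rw [segment_eq_image'] at hx
      obtain ⟨u, ⟨hu0, hu1⟩, rfl⟩ := hx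
      have hda : dist (a + u • (b - a)) a = u * (r₁ + r₂) := by
        rw [dist_eq_norm]
        simp only [add_sub_cancel_left, norm_smul, Real.norm_eq_abs,
          abs_of_nonneg hu0, hba]
      have hu : u = r₁ / (r₁ + r₂) := by
        rw [e1] at hda
        field_simp
        linarith
      rw [hu]
    · rintro rfl
      constructor
      · rw [dist_eq_norm]
        simp only [add_sub_cancel_left, norm_smul, Real.norm_eq_abs, hba]
        rw [abs_of_nonneg (by positivity)]
        rw [div_mul_cancel₀ _ (ne_of_gt hsum)]
      · rw [dist_eq_norm]
        have : a + (r₁ / (r₁ + r₂)) • (b - a) - b = (r₁ / (r₁ + r₂) - 1) • (b - a) := by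
          rw [sub_smul, one_smul]
          abel
        rw [this, norm_smul, Real.norm_eq_abs, hba]
        have h1 : r₁ / (r₁ + r₂) - 1 = -(r₂ / (r₁ + r₂)) := by
          field_simp
          ring
        rw [h1, abs_neg, abs_of_nonneg (by positivity)]
        rw [div_mul_cancel₀ _ (ne_of_gt hsum)]
  · -- quantitative case
    intro ε hε hd x hx
    obtain ⟨h1, h2⟩ := hx
    rw [Metric.mem_closedBall] at h1 h2
    have hsqrt : 0 ≤ Real.sqrt (2 * ε * max r₁ r₂) := Real.sqrt_nonneg _
    have hma : a ∈ segment ℝ a b := left_mem_segment ℝ a b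
    have hmb : b ∈ segment ℝ a b := right_mem_segment ℝ a b
    by_cases hc1 : r₁ < ε
    · calc Metric.infDist x (segment ℝ a b) ≤ dist x a :=
            Metric.infDist_le_dist_of_mem hma
        _ ≤ Real.sqrt (2 * ε * max r₁ r₂) + ε := by linarith
    by_cases hc2 : r₂ < ε
    · calc Metric.infDist x (segment ℝ a b) ≤ dist x b :=
            Metric.infDist_le_dist_of_mem hmb
        _ ≤ Real.sqrt (2 * ε * max r₁ r₂) + ε := by linarith
    push_neg at hc1 hc2
    -- main case: ε ≤ r₁, ε ≤ r₂
    set D : ℝ := ‖b - a‖ with hD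
    have hDd : D = dist a b := by rw [hD, ← dist_eq_norm, dist_comm]
    have hDge : D ≥ r₁ + r₂ - ε := by rw [hDd]; exact hd
    have hDpos : 0 < D := by linarith
    have hxa : ‖x - a‖ ≤ r₁ := by rw [← dist_eq_norm]; exact h1
    have hxb : ‖b - x‖ ≤ r₂ := by rw [← dist_eq_norm, dist_comm]; exact h2
    set s : ℝ := ⟪x - a, b - a⟫ with hs
    have hCS1 : s ≤ r₁ * D := by
      calc s ≤ ‖x - a‖ * ‖b - a‖ := real_inner_le_norm _ _
        _ ≤ r₁ * D := by
            apply mul_le_mul_of_nonneg_right hxa (norm_nonneg _)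
    have hinner2 : ⟪b - x, b - a⟫ = D ^ 2 - s := by
      have : b - x = (b - a) - (x - a) := by abel
      rw [this, inner_sub_left, real_inner_self_eq_norm_sq, hs]
    have hCS2 : D ^ 2 - s ≤ r₂ * D := by
      rw [← hinner2]
      calc ⟪b - x, b - a⟫ ≤ ‖b - x‖ * ‖b - a‖ := real_inner_le_norm _ _
        _ ≤ r₂ * D := mul_le_mul_of_nonneg_right hxb (norm_nonneg _)
    -- s / D ∈ [r₁ - ε, r₁], and 0 ≤ s ≤ D^2
    have hslow : D * (r₁ - ε) ≤ s := by nlinarith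
    have hs0 : 0 ≤ s := le_trans (by nlinarith) hslow
    have hsD2 : s ≤ D ^ 2 := by nlinarith
    set u : ℝ := s / D ^ 2 with hu
    have hu0 : 0 ≤ u := div_nonneg hs0 (by positivity)
    have hu1 : u ≤ 1 := by
      rw [hu, div_le_one (by positivity)]; exact hsD2
    set q := a + u • (b - a) with hq
    have hqseg : q ∈ segment ℝ a b := by
      rw [segment_eq_image']
      exact ⟨u, ⟨hu0, hu1⟩, rfl⟩
    have hdq : dist x q ^ 2 = ‖x - a‖ ^ 2 - s ^ 2 / D ^ 2 := by
      have hxq : x - q = (x - a) - u • (b - a) := by rw [hq]; abel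
      rw [dist_eq_norm, hxq, norm_sub_sq_real, real_inner_smul_right,
        norm_smul, Real.norm_eq_abs, abs_of_nonneg hu0]
      rw [mul_pow, ← hs, hu]
      field_simp
      ring
    have hkey : dist x q ^ 2 ≤ 2 * ε * max r₁ r₂ := by
      have h1' : ‖x - a‖ ^ 2 ≤ r₁ ^ 2 := by nlinarith [norm_nonneg (x - a)]
      have hfrac : (s / D) ^ 2 = s ^ 2 / D ^ 2 := by ring
      have hsd_low : r₁ - ε ≤ s / D := by
        rw [← sub_nonneg]
        have heq : s / D - (r₁ - ε) = (s - D * (r₁ - ε)) / D := by field_simp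
        rw [heq]
        exact div_nonneg (by linarith) (le_of_lt hDpos)
      have hsd_hi : s / D ≤ r₁ := by
        rw [div_le_iff₀ hDpos]; linarith
      have hsd_nn : 0 ≤ s / D := div_nonneg hs0 (le_of_lt hDpos)
      have hmax : r₁ ≤ max r₁ r₂ := le_max_left _ _
      have hprod : (r₁ - s / D) * (r₁ + s / D) ≤ ε * (2 * r₁) :=
        mul_le_mul (by linarith) (by linarith) (by linarith) hε
      have hid : (r₁ - s / D) * (r₁ + s / D) = r₁ ^ 2 - (s / D) ^ 2 := by ring
      have hstep : ‖x - a‖ ^ 2 - s ^ 2 / D ^ 2 ≤ 2 * ε * r₁ := by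
        rw [← hfrac]; linarith
      have hmono : 2 * ε * r₁ ≤ 2 * ε * max r₁ r₂ :=
        mul_le_mul_of_nonneg_left hmax (by positivity)
      rw [hdq]
      linarith
    have hdq' : dist x q ≤ Real.sqrt (2 * ε * max r₁ r₂) := by
      rw [← Real.sqrt_sq dist_nonneg]
      exact Real.sqrt_le_sqrt hkey
    calc Metric.infDist x (segment ℝ a b) ≤ dist x q :=
          Metric.infDist_le_dist_of_mem hqseg
      _ ≤ Real.sqrt (2 * ε * max r₁ r₂) + ε := by linarith
end
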